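/- arXiv:math/0606332 — 2 statements merged into one kernel-verified Lean document; each statement's English description precedes it below -/
import Mathlib

section
/- Let p be an odd prime and kₙ = Q(ζ_{p^{n+1}}). For f in the Weil module 𝒲ₙ, the element β(f) ∈ Z[Gal(kₙ/Q)] satisfying f(𝔞) ≡ α^{β(f)} mod μ_{2p^{n+1}} for every principal prime-to-p ideal 𝔞 = (α), is unique. -/
open NumberField nonZeroDivisors

/-- The action of the group ring `ℤ[G]` on `Kˣ`: `x ^ β = ∏_σ (σ x) ^ β_σ`. -/
noncomputable def groupRingAct {K : Type*} [Field K] [CharZero K]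
    (β : MonoidAlgebra ℤ (K ≃ₐ[ℚ] K)) (x : Kˣ) : Kˣ :=
  Finsupp.prod β.coeff fun σ m => (Units.map (σ : K →* K) x) ^ m

/-- The group `Iₙ` of fractional ideals of `K` prime to `p`: the subgroup of invertible
fractional ideals generated by the prime ideals of `𝓞 K` not containing `p`. -/
noncomputable def primeToP (p : ℕ) (K : Type*) [Field K] [NumberField K] :
    Subgroup (FractionalIdeal (𝓞 K)⁰ K)ˣ :=
  Subgroup.closure
    {u | ∃ P : Ideal (𝓞 K), P.IsPrime ∧ (p : 𝓞 K) ∉ P ∧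
      (u : FractionalIdeal (𝓞 K)⁰ K) = (P : FractionalIdeal (𝓞 K)⁰ K)}

open Polynomial

/-- If the fractional ideal underlying a unit `u` is an integral ideal `J` all of whose prime
divisors avoid `p`, then `u` belongs to `primeToP p K`. -/
lemma mem_primeToP_of_coeIdeal (p : ℕ) {K : Type*} [Field K] [NumberField K]
    (J : Ideal (𝓞 K)) :
    ∀ (_ : ∀ P : Ideal (𝓞 K), P.IsPrime → J ≤ P → (p : 𝓞 K) ∉ P)
    (u : (FractionalIdeal (𝓞 K)⁰ K)ˣ)
    (_ : (u : FractionalIdeal (𝓞 K)⁰ K) = J), u ∈ primeToP p K := by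
  induction J using UniqueFactorizationMonoid.induction_on_prime with
  | h₁ =>
      intro hcop u hu
      exfalso
      have h1 : (u : FractionalIdeal (𝓞 K)⁰ K) * ((u⁻¹ : _ˣ) : FractionalIdeal (𝓞 K)⁰ K) = 1 :=
        by rw [← Units.val_mul, mul_inv_cancel, Units.val_one]
      rw [hu] at h1
      rw [Ideal.zero_eq_bot, FractionalIdeal.coeIdeal_bot, zero_mul] at h1
      exact zero_ne_one h1
  | h₂ J hJ =>
      intro hcop u hu
      have hJ' : J = ⊤ := Ideal.isUnit_iff.mp hJ
      have : u = 1 := Units.ext (by rw [hu, hJ']; simp)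
      rw [this]; exact (primeToP p K).one_mem
  | h₃ J P hJ0 hP ih =>
      intro hcop u hu
      have hP0 : P ≠ 0 := hP.ne_zero
      have hPcoe : ((P : FractionalIdeal (𝓞 K)⁰ K)) ≠ 0 := by
        rwa [Ne, FractionalIdeal.coeIdeal_eq_zero]
      have hJcoe : ((J : FractionalIdeal (𝓞 K)⁰ K)) ≠ 0 := by
        rwa [Ne, FractionalIdeal.coeIdeal_eq_zero]
      let uP : (FractionalIdeal (𝓞 K)⁰ K)ˣ :=
        ⟨(P : FractionalIdeal (𝓞 K)⁰ K), (P : FractionalIdeal (𝓞 K)⁰ K)⁻¹,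
          mul_inv_cancel₀ hPcoe,
          by rw [mul_comm]; exact mul_inv_cancel₀ hPcoe⟩
      let uJ : (FractionalIdeal (𝓞 K)⁰ K)ˣ :=
        ⟨(J : FractionalIdeal (𝓞 K)⁰ K), (J : FractionalIdeal (𝓞 K)⁰ K)⁻¹,
          mul_inv_cancel₀ hJcoe,
          by rw [mul_comm]; exact mul_inv_cancel₀ hJcoe⟩
      have hu' : u = uP * uJ := by
        apply Units.ext
        rw [hu, Units.val_mul]
        show ((P * J : Ideal (𝓞 K)) : FractionalIdeal (𝓞 K)⁰ K) = _
        rw [FractionalIdeal.coeIdeal_mul]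
      have hPmem : uP ∈ primeToP p K := by
        apply Subgroup.subset_closure
        exact ⟨P, Ideal.isPrime_of_prime hP,
          hcop P (Ideal.isPrime_of_prime hP) Ideal.mul_le_left, rfl⟩
      have hJmem : uJ ∈ primeToP p K := by
        refine ih ?_ uJ rfl
        intro Q hQ hle
        exact hcop Q hQ (le_trans Ideal.mul_le_right hle)
      rw [hu']
      exact (primeToP p K).mul_mem hPmem hJmem

/-- A prime ideal containing both `p` and `t - z`, where `z` is a `p ^ m`-th root of unity
and `p ∣ t`, is improper. -/
lemma coprime_aux {O : Type*} [CommRing O] [IsDomain O] (p : ℕ) (hp : p.Prime)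
    (m : ℕ) (z : O) (hz : z ^ p ^ m = 1) (t : ℤ) (ht : (p : ℤ) ∣ t)
    (P : Ideal O) (hP : P.IsPrime) (hx : (t : O) - z ∈ P) (hpP : (p : O) ∈ P) :
    False := by
  haveI : Fact p.Prime := ⟨hp⟩
  let R := O ⧸ P
  haveI : IsDomain R := Ideal.Quotient.isDomain P
  have hp0 : (p : R) = 0 := by
    have := Ideal.Quotient.eq_zero_iff_mem.2 hpP
    rwa [map_natCast] at this
  haveI : CharP R p := (CharP.charP_iff_prime_eq_zero hp).2 hp0
  set zb : R := Ideal.Quotient.mk P z with hzb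
  have h1 : (zb - 1) ^ p ^ m = 0 := by
    rw [sub_pow_char_pow]
    have : zb ^ p ^ m = 1 := by
      rw [hzb, ← map_pow, hz, map_one]
    rw [this, one_pow, sub_self]
  have h2 : zb = 1 := by
    have := pow_eq_zero_iff (pow_ne_zero m hp.ne_zero) |>.mp h1
    rwa [sub_eq_zero] at this
  have hxb : ((t : O) : R) - zb = 0 := by
    have := Ideal.Quotient.eq_zero_iff_mem.2 hx
    rwa [map_sub] at this
  obtain ⟨k, rfl⟩ := ht
  have htb : (((p * k : ℤ) : O) : R) = 0 := by
    push_cast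
    rw [map_mul, map_natCast, hp0, zero_mul]
  rw [htb, h2, zero_sub] at hxb
  exact one_ne_zero (neg_eq_zero.mp hxb)

open Polynomial in
/-- Comparing exponents in two products of powers of distinct monic linear polynomials. -/
lemma exp_eq_of_prod_eq {K : Type*} [Field K] {ι : Type*} [Fintype ι] [DecidableEq ι]
    [DecidableEq K] (c : ι → K) (hc : Function.Injective c) (a b : ι → ℕ)
    (h : (∏ i, (X - C (c i)) ^ (a i)) = ∏ i, (X - C (c i)) ^ (b i)) : a = b := by
  have hne : ∀ e : ι → ℕ, (∏ i, (X - C (c i)) ^ (e i)) ≠ 0 := fun e =>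
    (monic_prod_of_monic _ _ fun i _ => (monic_X_sub_C (c i)).pow (e i)).ne_zero
  have hcount : ∀ (e : ι → ℕ) (i₀ : ι),
      Multiset.count (c i₀) (∏ i, (X - C (c i)) ^ (e i)).roots = e i₀ := by
    intro e i₀
    rw [Polynomial.roots_prod _ _ (hne e), Multiset.count_bind]
    have h1 : (Multiset.map (fun i => Multiset.count (c i₀) ((X - C (c i)) ^ e i).roots)
        Finset.univ.val).sum
        = ∑ i : ι, Multiset.count (c i₀) ((X - C (c i)) ^ e i).roots := rfl
    rw [h1, Finset.sum_eq_single i₀]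
    · rw [roots_pow, roots_X_sub_C, Multiset.count_nsmul, Multiset.count_singleton_self, mul_one]
    · intro i _ hi
      rw [roots_pow, roots_X_sub_C, Multiset.count_nsmul, Multiset.count_singleton,
        if_neg (fun hh => hi (hc hh.symm)), mul_zero]
    · intro hi; exact absurd (Finset.mem_univ i₀) hi
  funext i₀
  rw [← hcount a i₀, ← hcount b i₀, h]

/-- Let `p` be an odd prime and `kₙ = ℚ(ζ_{p^{n+1}})`.  For `f` in the Weil
module `𝒲ₙ` (a `ℤ[Gₙ]`-equivariant homomorphism `f : Iₙ →* kₙ*`), an element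
`β(f) ∈ ℤ[Gal(kₙ/ℚ)]` satisfying `f(𝔞) ≡ α^{β(f)} mod μ_{2p^{n+1}}` for every principal
prime-to-`p` ideal `𝔞 = (α)` is unique. -/
theorem weil_beta_unique
    (p n : ℕ) (hp : p.Prime) (hp2 : p ≠ 2)
    (N : ℕ+) (hN : (N : ℕ) = p ^ (n + 1))
    (K : Type*) [Field K] [NumberField K] [IsCyclotomicExtension {(N : ℕ)} ℚ K]
    -- the Galois action on fractional ideals, characterized set-theoretically
    (act1 : (K ≃ₐ[ℚ] K) → (FractionalIdeal (𝓞 K)⁰ K)ˣ → (FractionalIdeal (𝓞 K)⁰ K)ˣ)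
    (hact1 : ∀ (σ : K ≃ₐ[ℚ] K) (I : (FractionalIdeal (𝓞 K)⁰ K)ˣ) (x : K),
      x ∈ ((act1 σ I : (FractionalIdeal (𝓞 K)⁰ K)ˣ) : FractionalIdeal (𝓞 K)⁰ K) ↔
        ∃ y ∈ ((I : (FractionalIdeal (𝓞 K)⁰ K)ˣ) : FractionalIdeal (𝓞 K)⁰ K), σ y = x)
    -- `f` is a `ℤ[Gₙ]`-equivariant homomorphism on the prime-to-`p` ideals
    (f : primeToP p K →* Kˣ)
    (hf_equiv : ∀ (σ : K ≃ₐ[ℚ] K) (I : primeToP p K)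
      (hI : act1 σ (I : (FractionalIdeal (𝓞 K)⁰ K)ˣ) ∈ primeToP p K),
      f ⟨act1 σ (I : (FractionalIdeal (𝓞 K)⁰ K)ˣ), hI⟩ = Units.map (σ : K →* K) (f I))
    -- `β₁` and `β₂` both satisfy the defining congruence of the Weil module
    (β₁ β₂ : MonoidAlgebra ℤ (K ≃ₐ[ℚ] K))
    (hβ₁ : ∀ (I : primeToP p K) (α : Kˣ),
      ((I : (FractionalIdeal (𝓞 K)⁰ K)ˣ) : FractionalIdeal (𝓞 K)⁰ K) =
          FractionalIdeal.spanSingleton (𝓞 K)⁰ (α : K) →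
        ∃ ζ : Kˣ, ζ ^ (2 * p ^ (n + 1)) = 1 ∧ f I = ζ * groupRingAct β₁ α)
    (hβ₂ : ∀ (I : primeToP p K) (α : Kˣ),
      ((I : (FractionalIdeal (𝓞 K)⁰ K)ˣ) : FractionalIdeal (𝓞 K)⁰ K) =
          FractionalIdeal.spanSingleton (𝓞 K)⁰ (α : K) →
        ∃ ζ : Kˣ, ζ ^ (2 * p ^ (n + 1)) = 1 ∧ f I = ζ * groupRingAct β₂ α) :
    β₁ = β₂ := by
  classical
  haveI : Fact p.Prime := ⟨hp⟩
  obtain ⟨ζ, hζ⟩ := IsCyclotomicExtension.exists_isPrimitiveRoot ℚ K (Set.mem_singleton (N : ℕ)) N.ne_zero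
  -- injectivity of `σ ↦ σ ζ`
  have hinj : Function.Injective (fun σ : K ≃ₐ[ℚ] K => σ ζ) := by
    intro σ τ hστ
    simp only at hστ
    have hadj : Algebra.adjoin ℚ ({ζ} : Set K) = ⊤ :=
      IsCyclotomicExtension.adjoin_primitive_root_eq_top hζ
    ext x
    have hx : x ∈ Algebra.adjoin ℚ ({ζ} : Set K) := hadj ▸ Algebra.mem_top
    induction hx using Algebra.adjoin_induction with
    | mem y hy => rw [Set.mem_singleton_iff] at hy; rw [hy]; exact hστ
    | algebraMap r => rw [AlgEquiv.commutes, AlgEquiv.commutes]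
    | add y z _ _ hy hz => rw [map_add, map_add, hy, hz]
    | mul y z _ _ hy hz => rw [map_mul, map_mul, hy, hz]
  -- the primitive root as an algebraic integer
  set z : 𝓞 K := ⟨ζ, hζ.isIntegral N.pos⟩ with hzdef
  have hzpow : z ^ p ^ (n + 1) = 1 := by
    apply RingOfIntegers.coe_injective
    push_cast
    rw [← hN]
    exact hζ.pow_eq_one
  set M : ℕ := 2 * p ^ (n + 1) with hMdef
  have hM0 : (M : ℤ) ≠ 0 := by
    have hppos := hp.pos
    have : 0 < M := by rw [hMdef]; positivity
    exact_mod_cast this.ne'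
  set e : (K ≃ₐ[ℚ] K) → ℤ := fun σ => (β₁.coeff σ - β₂.coeff σ) * (M : ℤ) with hedef
  set a : (K ≃ₐ[ℚ] K) → ℕ := fun σ => (e σ).toNat with hadef
  set b : (K ≃ₐ[ℚ] K) → ℕ := fun σ => (-(e σ)).toNat with hbdef
  set P₁ : K[X] := ∏ σ : K ≃ₐ[ℚ] K, (X - C (σ ζ)) ^ (a σ) with hP1def
  set P₂ : K[X] := ∏ σ : K ≃ₐ[ℚ] K, (X - C (σ ζ)) ^ (b σ) with hP2def
  have key : ∀ k : ℤ, eval (((p * k : ℤ) : K)) P₁ = eval (((p * k : ℤ) : K)) P₂ := by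
    intro k
    set t : ℤ := p * k with htdef
    set αK : K := (t : K) - ζ with hαdef
    have hα0 : αK ≠ 0 := by
      intro h0
      have hζt : ζ = (t : K) := by
        rw [sub_eq_zero] at h0
        exact h0.symm
      have h1 : ((t ^ (N : ℕ) : ℤ) : K) = ((1 : ℤ) : K) := by
        push_cast
        rw [← hζt]
        exact hζ.pow_eq_one
      have h2 : t ^ (N : ℕ) = 1 := Int.cast_injective h1
      have h3 : (p : ℤ) ∣ 1 := dvd_trans ⟨k, htdef⟩ (h2 ▸ dvd_pow_self t N.pos.ne')
      have := Int.le_of_dvd one_pos h3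
      have hple : (p : ℤ) ≤ 1 := this
      have : (2 : ℤ) ≤ p := by exact_mod_cast hp.two_le
      omega
    set αu : Kˣ := Units.mk0 αK hα0 with hαudef
    set xO : 𝓞 K := (t : 𝓞 K) - z with hxOdef
    have hmapx : algebraMap (𝓞 K) K xO = αK := by
      rw [hxOdef, map_sub, map_intCast, hαdef]
      rfl
    -- the unit fractional ideal generated by αK
    set Iu : (FractionalIdeal (𝓞 K)⁰ K)ˣ :=
      ⟨FractionalIdeal.spanSingleton (𝓞 K)⁰ αK, FractionalIdeal.spanSingleton (𝓞 K)⁰ αK⁻¹,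
        by rw [FractionalIdeal.spanSingleton_mul_spanSingleton, mul_inv_cancel₀ hα0,
          FractionalIdeal.spanSingleton_one],
        by rw [FractionalIdeal.spanSingleton_mul_spanSingleton, inv_mul_cancel₀ hα0,
          FractionalIdeal.spanSingleton_one]⟩ with hIudef
    have hval : (Iu : FractionalIdeal (𝓞 K)⁰ K)
        = ((Ideal.span {xO} : Ideal (𝓞 K)) : FractionalIdeal (𝓞 K)⁰ K) := by
      rw [FractionalIdeal.coeIdeal_span_singleton, hmapx]
    have hmem : Iu ∈ primeToP p K := by
      refine mem_primeToP_of_coeIdeal p (Ideal.span {xO}) ?_ Iu hval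
      intro P hP hle hpP
      exact coprime_aux p hp (n + 1) z hzpow t ⟨k, htdef⟩ P hP
        (hle (Ideal.subset_span (Set.mem_singleton _))) hpP
    set I : primeToP p K := ⟨Iu, hmem⟩ with hIdef
    have hspan : ((I : (FractionalIdeal (𝓞 K)⁰ K)ˣ) : FractionalIdeal (𝓞 K)⁰ K)
        = FractionalIdeal.spanSingleton (𝓞 K)⁰ ((αu : Kˣ) : K) := rfl
    obtain ⟨ζ₁, hz1, h1⟩ := hβ₁ I αu hspan
    obtain ⟨ζ₂, hz2, h2⟩ := hβ₂ I αu hspan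
    set uσ : (K ≃ₐ[ℚ] K) → Kˣ := fun σ => Units.map ((σ : K ≃ₐ[ℚ] K) : K →* K) αu with huσdef
    have hA1 : groupRingAct β₁ αu = ∏ σ : K ≃ₐ[ℚ] K, uσ σ ^ (β₁.coeff σ) := by
      rw [groupRingAct]
      exact Finsupp.prod_fintype _ _ (fun σ => zpow_zero _)
    have hA2 : groupRingAct β₂ αu = ∏ σ : K ≃ₐ[ℚ] K, uσ σ ^ (β₂.coeff σ) := by
      rw [groupRingAct]
      exact Finsupp.prod_fintype _ _ (fun σ => zpow_zero _)
    have h12 : ζ₁ * groupRingAct β₁ αu = ζ₂ * groupRingAct β₂ αu := h1.symm.trans h2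
    have hAz : groupRingAct β₁ αu * (groupRingAct β₂ αu)⁻¹ = ζ₁⁻¹ * ζ₂ := by
      have hA1' : groupRingAct β₁ αu = ζ₁⁻¹ * (ζ₂ * groupRingAct β₂ αu) := by
        rw [← h12]; group
      rw [hA1']; group
    have key1 : (∏ σ : K ≃ₐ[ℚ] K, uσ σ ^ (e σ)) = 1 := by
      have hterm : ∀ σ : K ≃ₐ[ℚ] K, uσ σ ^ (e σ)
          = (uσ σ ^ (β₁.coeff σ) * (uσ σ ^ (β₂.coeff σ))⁻¹) ^ M := by
        intro σ
        rw [hedef]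
        rw [zpow_mul, ← zpow_sub, zpow_natCast]
      calc (∏ σ : K ≃ₐ[ℚ] K, uσ σ ^ (e σ))
          = ∏ σ : K ≃ₐ[ℚ] K, (uσ σ ^ (β₁.coeff σ) * (uσ σ ^ (β₂.coeff σ))⁻¹) ^ M :=
            Finset.prod_congr rfl (fun σ _ => hterm σ)
        _ = ((∏ σ : K ≃ₐ[ℚ] K, uσ σ ^ (β₁.coeff σ)) * (∏ σ : K ≃ₐ[ℚ] K, uσ σ ^ (β₂.coeff σ))⁻¹) ^ M := by
            rw [Finset.prod_pow]
            congr 1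
            rw [Finset.prod_mul_distrib, Finset.prod_inv_distrib]
        _ = (groupRingAct β₁ αu * (groupRingAct β₂ αu)⁻¹) ^ M := by rw [hA1, hA2]
        _ = (ζ₁⁻¹ * ζ₂) ^ M := by rw [hAz]
        _ = 1 := by rw [mul_pow, inv_pow, hMdef, hz1, hz2, inv_one, one_mul]
    have key2 : (∏ σ : K ≃ₐ[ℚ] K, uσ σ ^ (a σ)) = ∏ σ : K ≃ₐ[ℚ] K, uσ σ ^ (b σ) := by
      have hsplit : ∀ σ : K ≃ₐ[ℚ] K, uσ σ ^ (e σ) = uσ σ ^ (a σ) * (uσ σ ^ (b σ))⁻¹ := by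
        intro σ
        have ha' : a σ = (e σ).toNat := rfl
        have hb' : b σ = (-(e σ)).toNat := rfl
        have h0 : e σ = (a σ : ℤ) - (b σ : ℤ) := by rw [ha', hb']; omega
        rw [h0, zpow_sub, zpow_natCast, zpow_natCast]
      rw [← mul_inv_eq_one]
      rw [← Finset.prod_inv_distrib, ← Finset.prod_mul_distrib]
      rw [← key1]
      exact Finset.prod_congr rfl fun σ _ => (hsplit σ).symm
    -- pass to K and polynomial evaluations
    have keyK : (∏ σ : K ≃ₐ[ℚ] K, ((t : K) - σ ζ) ^ (a σ)) = ∏ σ : K ≃ₐ[ℚ] K, ((t : K) - σ ζ) ^ (b σ) := by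
      have hcoe : ∀ σ : K ≃ₐ[ℚ] K, ((uσ σ : Kˣ) : K) = (t : K) - σ ζ := by
        intro σ
        rw [huσdef]
        show (σ : K ≃ₐ[ℚ] K) ((αu : Kˣ) : K) = _
        show (σ : K ≃ₐ[ℚ] K) αK = _
        rw [hαdef, map_sub, map_intCast]
      have := congrArg (Units.coeHom K) key2
      rw [map_prod, map_prod] at this
      simp only [map_pow] at this
      calc (∏ σ : K ≃ₐ[ℚ] K, ((t : K) - σ ζ) ^ (a σ))
          = ∏ σ : K ≃ₐ[ℚ] K, ((uσ σ : Kˣ) : K) ^ (a σ) := by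
            exact Finset.prod_congr rfl fun σ _ => by rw [hcoe σ]
        _ = ∏ σ : K ≃ₐ[ℚ] K, ((uσ σ : Kˣ) : K) ^ (b σ) := this
        _ = ∏ σ : K ≃ₐ[ℚ] K, ((t : K) - σ ζ) ^ (b σ) :=
            Finset.prod_congr rfl fun σ _ => by rw [hcoe σ]
    rw [hP1def, hP2def, eval_prod, eval_prod]
    simp only [eval_pow, eval_sub, eval_X, eval_C]
    exact keyK
  -- conclude equality of the two polynomials
  have hsub : Set.range (fun k : ℤ => ((p * k : ℤ) : K)) ⊆
      {x : K | eval x P₁ = eval x P₂} := by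
    rintro x ⟨k, rfl⟩
    exact key k
  have hinf : Set.Infinite (Set.range (fun k : ℤ => ((p * k : ℤ) : K))) := by
    apply Set.infinite_range_of_injective
    intro k1 k2 hk
    have : ((p * k1 : ℤ)) = (p * k2 : ℤ) := Int.cast_injective hk
    have hpz : (p : ℤ) ≠ 0 := by exact_mod_cast hp.ne_zero
    exact mul_left_cancel₀ hpz this
  have hP12 : P₁ = P₂ :=
    Polynomial.eq_of_infinite_eval_eq P₁ P₂ (hinf.mono hsub)
  have hab : a = b := exp_eq_of_prod_eq (fun σ : K ≃ₐ[ℚ] K => σ ζ) hinj a b (by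
    rw [← hP1def, ← hP2def]; exact hP12)
  have hcoeff : ∀ σ : K ≃ₐ[ℚ] K, β₁.coeff σ = β₂.coeff σ := by
    intro σ
    have hob := congrFun hab σ
    have he0 : e σ = 0 := by
      rw [hadef, hbdef] at hob
      simp only at hob
      omega
    rw [hedef] at he0
    simp only at he0
    rcases mul_eq_zero.mp he0 with h | h
    · linarith [sub_eq_zero.mp h]
    · exact absurd h hM0
  exact MonoidAlgebra.ext (Finsupp.ext hcoeff)
end

section
/- Let Λ = Z_p[[T]] and let M be a finitely generated Λ-module with no nontrivial finite Λ-submodule, annihilated by a distinguished polynomial. If 𝓜 ∈ Λ is a generator of Ann_Λ(M) and 𝓜 is coprime to ωₙ = (1+T)^{p^n} - 1 for all n, then the projective limit over n of Ann_{Z_p[T]/(ωₙ)}(M/ωₙM) (with respect to the natural restriction maps) equals 𝓜·Λ. -/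
open PowerSeries

/-- `ωₖ = (1+T)^{p^k} - 1` in the Iwasawa algebra `Λ = ℤ_p[[T]]`. -/
noncomputable def omegaPoly (p : ℕ) [Fact p.Prime] (k : ℕ) : PowerSeries ℤ_[p] :=
  (1 + PowerSeries.X) ^ (p ^ k) - 1

/-- `𝓜 ∈ ℤ_p[[T]]` is a distinguished polynomial: a monic polynomial all of whose
non-leading coefficients are divisible by `p`. -/
def IsDistinguished (p : ℕ) [Fact p.Prime] (𝓜 : PowerSeries ℤ_[p]) : Prop :=
  ∃ P : Polynomial ℤ_[p], P.Monic ∧ (∀ i < P.natDegree, P.coeff i ∈ Ideal.span {(p : ℤ_[p])})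
    ∧ 𝓜 = (P : PowerSeries ℤ_[p])


open Finset Filter

variable {p : ℕ} [Fact p.Prime]

/-- Shift a power series down by `d`. -/
noncomputable def psShift (d : ℕ) (f : PowerSeries ℤ_[p]) : PowerSeries ℤ_[p] :=
  PowerSeries.mk fun n => coeff (n + d) f

lemma coeff_psShift (d n : ℕ) (f : PowerSeries ℤ_[p]) :
    coeff n (psShift d f) = coeff (n + d) f := coeff_mk _ _

lemma psShift_decomp (d : ℕ) (f : PowerSeries ℤ_[p]) :
    f = (X : PowerSeries ℤ_[p])^d * psShift d f + (f - X^d * psShift d f) := by ring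

/-- The iteration for Weierstrass division. -/
noncomputable def wSeq (d : ℕ) (B f : PowerSeries ℤ_[p]) : ℕ → PowerSeries ℤ_[p]
  | 0 => f
  | n+1 => -((p : PowerSeries ℤ_[p]) * (B * psShift d (wSeq d B f n)))

lemma wSeq_dvd (d : ℕ) (B f : PowerSeries ℤ_[p]) :
    ∀ n i, (p:ℤ_[p])^n ∣ coeff i (wSeq d B f n) := by
  intro n
  induction n with
  | zero => intro i; simp
  | succ n ih =>
    intro i
    have hp : (p : PowerSeries ℤ_[p]) = C (p : ℤ_[p]) := by
      simp [map_natCast]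
    rw [wSeq, map_neg, hp, coeff_C_mul]
    rw [pow_succ, mul_comm ((p:ℤ_[p])^n)]
    refine Dvd.dvd.neg_right ?_
    refine mul_dvd_mul_left _ ?_
    rw [coeff_mul]
    refine Finset.dvd_sum fun x hx => ?_
    exact Dvd.dvd.mul_left (by rw [coeff_psShift]; exact ih _) _

lemma wSeq_norm (d : ℕ) (B f : PowerSeries ℤ_[p]) (n i : ℕ) :
    ‖coeff i (wSeq d B f n)‖ ≤ ((p:ℝ)⁻¹)^n := by
  obtain ⟨c, hc⟩ := wSeq_dvd d B f n i
  rw [hc]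
  calc ‖(p:ℤ_[p])^n * c‖ ≤ ‖(p:ℤ_[p])^n‖ * 1 := by
        refine (norm_mul_le _ _).trans ?_
        gcongr
        exact PadicInt.norm_le_one c
    _ ≤ ((p:ℝ)⁻¹)^n := by
        rw [mul_one]
        refine (norm_pow_le _ _).trans ?_
        rw [PadicInt.norm_p]

lemma wSeq_summable (d : ℕ) (B f : PowerSeries ℤ_[p]) (i : ℕ) :
    Summable (fun n => coeff i (wSeq d B f n)) := by
  refine Summable.of_norm_bounded (summable_geometric_of_lt_one (by positivity) ?_)
    (fun n => wSeq_norm d B f n i)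
  rw [inv_lt_one_iff₀]
  right
  exact_mod_cast (Fact.out : p.Prime).one_lt

lemma wSeq_telescope (d : ℕ) (B f : PowerSeries ℤ_[p]) (N : ℕ) :
    f = (X^d + (p : PowerSeries ℤ_[p]) * B) * (∑ n ∈ range N, psShift d (wSeq d B f n))
        + (∑ n ∈ range N, (wSeq d B f n - X^d * psShift d (wSeq d B f n)))
        + wSeq d B f N := by
  induction N with
  | zero => simp [wSeq]
  | succ N ih =>
    rw [Finset.sum_range_succ, Finset.sum_range_succ]
    have : wSeq d B f (N+1) = -((p : PowerSeries ℤ_[p]) * (B * psShift d (wSeq d B f N))) := rfl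
    rw [this]
    conv_lhs => rw [ih]
    ring

/-- Weierstrass division by `X^d + p·B`. -/
lemma weierstrass_div (d : ℕ) (B f : PowerSeries ℤ_[p]) :
    ∃ (q : PowerSeries ℤ_[p]) (c : ℕ → ℤ_[p]),
      f = (X^d + (p : PowerSeries ℤ_[p]) * B) * q
        + ∑ b ∈ range d, C (c b) * X^b := by
  classical
  set M : PowerSeries ℤ_[p] := X^d + (p : PowerSeries ℤ_[p]) * B with hM
  set g := wSeq d B f with hg
  set ρ : ℕ → ℤ_[p] := fun i => ∑' n, coeff i (g n) with hρ
  refine ⟨PowerSeries.mk fun i => ρ (i + d), ρ, ?_⟩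
  set q : PowerSeries ℤ_[p] := PowerSeries.mk fun i => ρ (i + d) with hq
  set r : PowerSeries ℤ_[p] := ∑ b ∈ range d, C (ρ b) * X^b with hr
  ext i
  -- three limits
  have hgN : Tendsto (fun N => coeff i (g N)) atTop (nhds 0) := by
    apply squeeze_zero_norm (fun N => wSeq_norm d B f N i)
    apply tendsto_pow_atTop_nhds_zero_of_lt_one (by positivity)
    rw [inv_lt_one_iff₀]; right
    exact_mod_cast (Fact.out : p.Prime).one_lt
  have htr : Tendsto (fun N => coeff i
      (∑ n ∈ range N, (g n - X^d * psShift d (g n)))) atTop (nhds (coeff i r)) := by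
    have hco : ∀ h : PowerSeries ℤ_[p], coeff i (h - X^d * psShift d h)
        = if i < d then coeff i h else 0 := by
      intro h
      rw [map_sub, coeff_X_pow_mul']
      split_ifs with h1 h2
      · exact absurd h2 (by omega)
      · rw [coeff_psShift, Nat.sub_add_cancel h1, sub_self]
      · rw [sub_zero]
      · exact absurd (by omega : d ≤ i) h1
    simp only [map_sum, hco]
    by_cases hi : i < d
    · simp only [if_pos hi]
      have : coeff i r = ρ i := by
        rw [hr, map_sum]
        rw [Finset.sum_eq_single i (fun b _ hb => by
              rw [coeff_C_mul_X_pow, if_neg (Ne.symm hb)])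
            (fun hh => absurd (Finset.mem_range.2 hi) hh)]
        rw [coeff_C_mul_X_pow, if_pos rfl]
      rw [this]
      exact (wSeq_summable d B f i).hasSum.tendsto_sum_nat
    · simp only [if_neg hi]
      have : coeff i r = 0 := by
        rw [hr, map_sum]
        refine Finset.sum_eq_zero fun b hb => ?_
        rw [coeff_C_mul_X_pow, if_neg]
        intro hib; exact hi (hib ▸ Finset.mem_range.1 hb)
      rw [this]
      simpa using tendsto_const_nhds
  have hq : Tendsto (fun N => coeff i
      (M * ∑ n ∈ range N, psShift d (g n))) atTop (nhds (coeff i (M * q))) := by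
    have hco : ∀ N, coeff i (M * ∑ n ∈ range N, psShift d (g n))
        = ∑ x ∈ Finset.HasAntidiagonal.antidiagonal i, (coeff x.1 M) *
            (∑ n ∈ range N, coeff (x.2 + d) (g n)) := by
      intro N
      rw [coeff_mul]
      refine Finset.sum_congr rfl fun x _ => ?_
      rw [map_sum]
      simp [coeff_psShift]
    simp only [hco]
    rw [coeff_mul]
    apply tendsto_finset_sum
    intro x _
    have : coeff x.2 q = ρ (x.2 + d) := coeff_mk _ _
    rw [this]
    exact Tendsto.const_mul _ (wSeq_summable d B f (x.2 + d)).hasSum.tendsto_sum_nat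
  have hdiag : Tendsto (fun N => coeff i (M * ∑ n ∈ range N, psShift d (g n))
      + coeff i (∑ n ∈ range N, (g n - X^d * psShift d (g n)))
      + coeff i (g N)) atTop
      (nhds (coeff i (M * q) + coeff i r + 0)) :=
    (hq.add htr).add hgN
  have hconst : ∀ N, coeff i (M * ∑ n ∈ range N, psShift d (g n))
      + coeff i (∑ n ∈ range N, (g n - X^d * psShift d (g n)))
      + coeff i (g N) = coeff i f := by
    intro N
    rw [← map_add, ← map_add]
    exact congrArg _ (wSeq_telescope d B f N).symm
  simp only [hconst] at hdiag
  have := tendsto_nhds_unique tendsto_const_nhds hdiag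
  rw [map_add]
  rw [this, add_zero]

/-- The mixed ideal `(p, X)` of `ℤ_p[[X]]`. -/
noncomputable def mixIdeal (p : ℕ) [Fact p.Prime] : Ideal (PowerSeries ℤ_[p]) :=
  Ideal.span {(p : PowerSeries ℤ_[p]), X}

lemma omega_mem_mixIdeal_pow (k : ℕ) : omegaPoly p k ∈ (mixIdeal p)^(k+1) := by
  induction k with
  | zero =>
    have : omegaPoly p 0 = (X : PowerSeries ℤ_[p]) := by
      simp [omegaPoly]
    rw [this, pow_one]
    exact Ideal.subset_span (by simp)
  | succ k ih =>
    set A : PowerSeries ℤ_[p] := (1 + X)^(p^k) with hA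
    have hfact : omegaPoly p (k+1) = (∑ i ∈ Finset.range p, A^i) * omegaPoly p k := by
      rw [omegaPoly, omegaPoly, ← hA, geom_sum_mul, ← pow_mul, ← pow_succ]
    have hs : (∑ i ∈ Finset.range p, A^i) ∈ mixIdeal p := by
      have hX : (X : PowerSeries ℤ_[p]) ∣ (∑ i ∈ Finset.range p, A^i) - (p : PowerSeries ℤ_[p]) := by
        rw [X_dvd_iff, map_sub, map_sum]
        have : ∀ i : ℕ, constantCoeff (A ^ i) = 1 := by
          intro i
          rw [hA, ← pow_mul, map_pow, map_add, constantCoeff_one, constantCoeff_X, add_zero,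
            one_pow]
        simp only [this, Finset.sum_const, Finset.card_range, nsmul_eq_mul, mul_one, map_natCast,
          sub_self]
      obtain ⟨t, ht⟩ := hX
      have : (∑ i ∈ Finset.range p, A^i) = (p : PowerSeries ℤ_[p]) + X * t := by
        rw [← ht]; ring
      rw [this]
      exact add_mem (Ideal.subset_span (by simp)) (Ideal.mul_mem_right t _
        (Ideal.subset_span (by simp)))
    rw [hfact, pow_succ']
    exact Ideal.mul_mem_mul hs ih

lemma mixIdeal_pow_le (n : ℕ) :
    (mixIdeal p)^n ≤ Ideal.span {(p : PowerSeries ℤ_[p])} ⊔ Ideal.span {(X : PowerSeries ℤ_[p])^n} := by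
  induction n with
  | zero =>
    rw [pow_zero, pow_zero, Ideal.span_singleton_one, Ideal.one_eq_top]
    exact le_sup_right
  | succ n ih =>
    rw [pow_succ]
    have h1 : (mixIdeal p : Ideal (PowerSeries ℤ_[p]))
        ≤ Ideal.span {(p : PowerSeries ℤ_[p])} ⊔ Ideal.span {(X : PowerSeries ℤ_[p])} := by
      rw [mixIdeal, Ideal.span_insert]
    calc (mixIdeal p)^n * mixIdeal p
        ≤ (Ideal.span {(p : PowerSeries ℤ_[p])} ⊔ Ideal.span {(X : PowerSeries ℤ_[p])^n})
          * (Ideal.span {(p : PowerSeries ℤ_[p])} ⊔ Ideal.span {(X : PowerSeries ℤ_[p])}) :=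
          Ideal.mul_mono ih h1
      _ ≤ _ := by
          rw [Ideal.mul_sup, Ideal.sup_mul, Ideal.sup_mul]
          refine sup_le (sup_le ?_ ?_) (sup_le ?_ ?_)
          · exact le_sup_left.trans' Ideal.mul_le_right
          · exact le_sup_left.trans' Ideal.mul_le_right
          · exact le_sup_left.trans' Ideal.mul_le_left
          · rw [Ideal.span_singleton_mul_span_singleton, ← pow_succ]
            exact le_sup_right

section Modules

variable (M : Type*) [AddCommGroup M] [Module (PowerSeries ℤ_[p]) M]

/-- The ideal of `y ∈ Λ` with `y • M ⊆ pʲ • M`. -/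
noncomputable def pPowIdeal (j : ℕ) : Ideal (PowerSeries ℤ_[p]) where
  carrier := {y | ∀ m : M, ∃ m', y • m = ((p : PowerSeries ℤ_[p])^j) • m'}
  add_mem' := by
    rintro a b ha hb m
    obtain ⟨m₁, h₁⟩ := ha m
    obtain ⟨m₂, h₂⟩ := hb m
    exact ⟨m₁ + m₂, by rw [add_smul, h₁, h₂, smul_add]⟩
  zero_mem' := fun m => ⟨0, by simp⟩
  smul_mem' := by
    rintro c y hy m
    obtain ⟨m', h⟩ := hy m
    refine ⟨c • m', ?_⟩
    rw [smul_eq_mul, mul_smul, h, ← mul_smul, mul_comm, mul_smul]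

lemma mem_pPowIdeal_iff (j : ℕ) (y : PowerSeries ℤ_[p]) :
    y ∈ pPowIdeal M j ↔ ∀ m : M, ∃ m', y • m = ((p : PowerSeries ℤ_[p])^j) • m' := Iff.rfl

lemma pPowIdeal_mul_mem {i j : ℕ} {y z : PowerSeries ℤ_[p]}
    (hy : y ∈ pPowIdeal M i) (hz : z ∈ pPowIdeal M j) : y * z ∈ pPowIdeal M (i + j) := by
  intro m
  obtain ⟨m₁, h₁⟩ := hz m
  obtain ⟨m₂, h₂⟩ := hy m₁
  refine ⟨m₂, ?_⟩
  rw [mul_smul, h₁, ← mul_smul, mul_comm, mul_smul, h₂, ← mul_smul, ← pow_add, Nat.add_comm j i]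

lemma pPowIdeal_pow_le' (j : ℕ) : (pPowIdeal (p := p) M 1)^j ≤ pPowIdeal M j := by
  induction j with
  | zero => rw [pow_zero, Ideal.one_eq_top]; exact fun y _ m => ⟨y • m, by rw [pow_zero, one_smul]⟩
  | succ j ih =>
    rw [pow_succ]
    exact Ideal.mul_le.2 fun r hr s hs => pPowIdeal_mul_mem M (ih hr) hs

lemma mixIdeal_pow_le_pPowIdeal (d : ℕ)
    (hXd : (X : PowerSeries ℤ_[p])^d ∈ pPowIdeal (p := p) M 1) (j : ℕ) :
    (mixIdeal p)^(d*j) ≤ pPowIdeal M j := by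
  have hp1 : (p : PowerSeries ℤ_[p]) ∈ pPowIdeal M 1 := fun m => ⟨m, by rw [pow_one]⟩
  have h1 : (mixIdeal p)^d ≤ pPowIdeal M 1 := by
    refine (mixIdeal_pow_le d).trans (sup_le ?_ ?_) <;>
      rw [Ideal.span_le, Set.singleton_subset_iff]
    · exact hp1
    · exact hXd
  calc (mixIdeal p)^(d*j) = ((mixIdeal p)^d)^j := pow_mul _ d j
    _ ≤ (pPowIdeal M 1)^j := Ideal.pow_right_mono h1 j
    _ ≤ pPowIdeal M j := pPowIdeal_pow_le' M j

end Modules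


/-- Let `Λ = ℤ_p[[T]]` and let `M` be a finitely generated `Λ`-module with
no nontrivial finite `Λ`-submodule, annihilated by a distinguished polynomial.  If `𝓜 ∈ Λ` is
a generator of `Ann_Λ(M)` and `𝓜` is coprime to `ωₖ = (1+T)^{p^k} - 1` for all `k`, then the
projective limit over `k` of `Ann_{ℤ_p[T]/(ωₖ)}(M/ωₖM)` (under the natural restriction maps,
identified with a subset of `Λ ≅ lim← ℤ_p[T]/(ωₖ)`: the set of `x ∈ Λ` with `x·M ⊆ ωₖM` for
all `k`) equals `𝓜·Λ`. -/
theorem limit_of_annihilators_eq_minimal_polynomial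
    (p : ℕ) [Fact p.Prime]
    (M : Type*) [AddCommGroup M] [Module (PowerSeries ℤ_[p]) M]
    [Module.Finite (PowerSeries ℤ_[p]) M]
    (hnofin : ∀ N : Submodule (PowerSeries ℤ_[p]) M, (N : Set M).Finite → N = ⊥)
    (𝓜 : PowerSeries ℤ_[p])
    (hdist : IsDistinguished p 𝓜)
    (hann : Module.annihilator (PowerSeries ℤ_[p]) M = Ideal.span {𝓜})
    (hcop : ∀ (k : ℕ) (q : PowerSeries ℤ_[p]), q ∣ 𝓜 → q ∣ omegaPoly p k → IsUnit q) :
    {x : PowerSeries ℤ_[p] | ∀ (k : ℕ) (m : M), ∃ m' : M, x • m = omegaPoly p k • m'} =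
      {x : PowerSeries ℤ_[p] | 𝓜 ∣ x} := by
  classical
  have h𝓜0 : ∀ m : M, 𝓜 • m = 0 := fun m =>
    Module.mem_annihilator.1 (hann ▸ Ideal.mem_span_singleton_self 𝓜) m
  ext x
  simp only [Set.mem_setOf_eq]
  constructor
  · intro hx
    obtain ⟨P, hmon, hP, h𝓜P⟩ := hdist
    by_cases hd0 : P.natDegree = 0
    · have hP1 : P = 1 := hmon.natDegree_eq_zero.mp hd0
      exact ⟨x, by rw [h𝓜P, hP1, Polynomial.coe_one, one_mul]⟩
    set d := P.natDegree with hdd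
    have hd1 : 0 < d := Nat.pos_of_ne_zero hd0
    -- construct B with 𝓜 = X^d + p*B
    have hdvd : ∀ i, ∃ b, coeff i (𝓜 - X^d) = (p:ℤ_[p]) * b := by
      intro i
      rw [map_sub, coeff_X_pow, h𝓜P, Polynomial.coeff_coe]
      rcases lt_trichotomy i d with h|h|h
      · rw [if_neg h.ne]
        obtain ⟨b, hb⟩ := Ideal.mem_span_singleton.1 (hP i h)
        exact ⟨b, by rw [hb, sub_zero]⟩
      · refine ⟨0, ?_⟩
        rw [if_pos h, h, hdd, hmon.coeff_natDegree, sub_self, mul_zero]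
      · refine ⟨0, ?_⟩
        rw [if_neg h.ne', Polynomial.coeff_eq_zero_of_natDegree_lt h, sub_zero, mul_zero]
    choose Bc hBc using hdvd
    set B : PowerSeries ℤ_[p] := PowerSeries.mk Bc with hB
    have h𝓜B : 𝓜 = X^d + (p : PowerSeries ℤ_[p]) * B := by
      have hpC : (p : PowerSeries ℤ_[p]) = C (p:ℤ_[p]) := (map_natCast (C (R := ℤ_[p])) p).symm
      ext i
      rw [map_add, hpC, coeff_C_mul, hB, coeff_mk]
      have h := hBc i
      rw [map_sub, sub_eq_iff_eq_add] at h
      rw [h]; ring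
    -- ℤ_p-module structure (via ULift to match universes)
    letI instZ : Module (ULift.{u_1} ℤ_[p]) M :=
      Module.compHom M ((C (R := ℤ_[p])).comp (ULift.ringEquiv.toRingHom))
    have hsmulZ : ∀ (c : ULift.{u_1} ℤ_[p]) (m : M), c • m = (C c.down) • m :=
      fun _ _ => rfl
    -- M is finitely generated over ℤ_p
    obtain ⟨s, hs⟩ := Module.Finite.fg_top (R := PowerSeries ℤ_[p]) (M := M)
    set T : Finset M := Finset.image (fun pr : ℕ × M => (X : PowerSeries ℤ_[p])^pr.1 • pr.2)
      ((Finset.range d) ×ˢ s) with hT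
    set N' : Submodule (PowerSeries ℤ_[p]) M :=
      { carrier := {u | ∀ f : PowerSeries ℤ_[p], f • u ∈ Submodule.span (ULift.{u_1} ℤ_[p]) (T : Set M)}
        add_mem' := fun ha hb f => by rw [smul_add]; exact add_mem (ha f) (hb f)
        zero_mem' := fun f => by rw [smul_zero]; exact zero_mem _
        smul_mem' := fun c u hu f => by rw [← mul_smul]; exact hu (f * c) } with hN'
    have hsN' : (s : Set M) ⊆ (N' : Set M) := by
      intro u hu
      intro f
      obtain ⟨q, c, hf⟩ := weierstrass_div d B f
      rw [← h𝓜B] at hf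
      rw [hf, add_smul]
      have h1 : (𝓜 * q) • u = 0 := by rw [mul_comm, mul_smul, h𝓜0, smul_zero]
      rw [h1, zero_add, Finset.sum_smul]
      refine Submodule.sum_mem _ fun b hb => ?_
      rw [mul_smul, ← hsmulZ ⟨c b⟩]
      refine Submodule.smul_mem _ _ (Submodule.subset_span ?_)
      exact Finset.mem_coe.2 (Finset.mem_image.2
        ⟨(b, u), Finset.mem_product.2 ⟨hb, hu⟩, rfl⟩)
    have hspan : ∀ m : M, m ∈ Submodule.span (ULift.{u_1} ℤ_[p]) (T : Set M) := by
      intro m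
      have hm : m ∈ Submodule.span (PowerSeries ℤ_[p]) (s : Set M) := by
        rw [hs]; trivial
      have hle : Submodule.span (PowerSeries ℤ_[p]) (s : Set M) ≤ N' :=
        Submodule.span_le.2 hsN'
      have := hle hm (1 : PowerSeries ℤ_[p])
      rwa [one_smul] at this
    letI : Module.Finite (ULift.{u_1} ℤ_[p]) M := ⟨⟨T, eq_top_iff.2 fun m _ => hspan m⟩⟩
    letI : IsNoetherianRing (ULift.{u_1} ℤ_[p]) :=
      isNoetherianRing_of_ringEquiv ℤ_[p] ULift.ringEquiv.symm
    letI : IsLocalRing (ULift.{u_1} ℤ_[p]) :=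
      RingEquiv.isLocalRing ULift.ringEquiv.symm
    -- Krull intersection over ℤ_p
    have hKrull := Ideal.iInf_pow_smul_eq_bot_of_isLocalRing (R := ULift.{u_1} ℤ_[p]) (M := M)
      (I := Ideal.span {ULift.up (p : ℤ_[p])}) (by
        rw [Ne, Ideal.span_singleton_eq_top]
        intro h
        have h2 : IsUnit ((ULift.ringEquiv : ULift.{u_1} ℤ_[p] ≃+* ℤ_[p]) (ULift.up (p:ℤ_[p]))) :=
          h.map _
        exact PadicInt.p_nonunit (by simpa using h2))
    -- X^d • M ⊆ p M
    have hXd : (X : PowerSeries ℤ_[p])^d ∈ pPowIdeal (p := p) M 1 := by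
      intro m
      refine ⟨-(B • m), ?_⟩
      have hX : (X : PowerSeries ℤ_[p])^d = 𝓜 - (p : PowerSeries ℤ_[p]) * B := by
        rw [h𝓜B]; ring
      rw [hX, sub_smul, h𝓜0, zero_sub, mul_smul, pow_one, ← smul_neg]
    have hxm : ∀ m : M, x • m = 0 := by
      intro m
      have hmem : x • m ∈ (⨅ j : ℕ, (Ideal.span {ULift.up (p : ℤ_[p])})^j
          • (⊤ : Submodule (ULift.{u_1} ℤ_[p]) M)) := by
        rw [Submodule.mem_iInf]
        intro j
        obtain ⟨m', hm'⟩ := hx (d * j) m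
        have hω : omegaPoly p (d*j) ∈ pPowIdeal (p := p) M j :=
          mixIdeal_pow_le_pPowIdeal M d hXd j
            (Ideal.pow_le_pow_right (Nat.le_succ _) (omega_mem_mixIdeal_pow (d*j)))
        obtain ⟨m'', hm''⟩ := hω m'
        have hxp : x • m = (ULift.up ((p:ℤ_[p])^j)) • m'' := by
          rw [hm', hm'', hsmulZ ⟨(p:ℤ_[p])^j⟩, map_pow, map_natCast]
        have hup : (ULift.up ((p:ℤ_[p])^j) : ULift.{u_1} ℤ_[p]) = (ULift.up (p:ℤ_[p]))^j :=
          map_pow (ULift.ringEquiv.symm : ℤ_[p] ≃+* ULift.{u_1} ℤ_[p]) (p:ℤ_[p]) j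
        rw [hxp, hup, Ideal.span_singleton_pow]
        exact Submodule.smul_mem_smul (Ideal.mem_span_singleton_self _) trivial
      rw [hKrull] at hmem
      exact (Submodule.mem_bot _).1 hmem
    have hxann : x ∈ Module.annihilator (PowerSeries ℤ_[p]) M := Module.mem_annihilator.2 hxm
    rw [hann] at hxann
    exact Ideal.mem_span_singleton.1 hxann
  · rintro ⟨y, rfl⟩ k m
    exact ⟨0, by rw [mul_smul, h𝓜0, smul_zero]⟩
end
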